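/- A qubit belongs to at most one su(2) block for ψ: if S and T are both su(2) blocks for ψ and some qubit j lies in both S and T, then S = T. -/

import Mathlib

open scoped Matrix

noncomputable section

/-- The `n`-qubit Hilbert space `(ℂ²)^{⊗n}`, realized as functions `(Fin n → Fin 2) → ℂ`. -/
abbrev QState (n : ℕ) := (Fin n → Fin 2) → ℂ

/-- The ambient real vector space `ℝ × (Fin n → M₂(ℂ))` containing `u(1) ⊕ su(2)^n`. -/
abbrev GV (n : ℕ) := ℝ × (Fin n → Matrix (Fin 2) (Fin 2) ℂ)

/-- `su(2)`: traceless skew-Hermitian `2 × 2` complex matrices, as a real subspace. -/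
def su2 : Submodule ℝ (Matrix (Fin 2) (Fin 2) ℂ) where
  carrier := {X | Xᴴ = -X ∧ X.trace = 0}
  add_mem' := by
    rintro X Y ⟨hX1, hX2⟩ ⟨hY1, hY2⟩
    exact ⟨by rw [Matrix.conjTranspose_add, hX1, hY1, neg_add],
           by rw [Matrix.trace_add, hX2, hY2, add_zero]⟩
  zero_mem' := ⟨by simp, by simp⟩
  smul_mem' := by
    rintro r X ⟨hX1, hX2⟩
    exact ⟨by rw [Matrix.conjTranspose_smul, hX1, star_trivial, smul_neg],
           by rw [Matrix.trace_smul, hX2, smul_zero]⟩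

/-- The Lie algebra `g = u(1) ⊕ su(2)^n` as a real subspace of `GV n`. -/
def gSub (n : ℕ) : Submodule ℝ (GV n) :=
  (⊤ : Submodule ℝ ℝ).prod (Submodule.pi Set.univ fun _ => su2)

/-- `g_S`: elements `(0, X)` of `g` with `X j = 0` for `j ∉ S`. -/
def gS {n : ℕ} (S : Set (Fin n)) : Submodule ℝ (GV n) :=
  (⊥ : Submodule ℝ ℝ).prod (Submodule.pi Set.univ fun j =>
    letI := Classical.dec (j ∈ S)
    if j ∈ S then su2 else ⊥)

/-- `ḡ_S`: elements `(t, X)` of `g` with `X j = 0` for `j ∈ S`. -/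
def gBar {n : ℕ} (S : Set (Fin n)) : Submodule ℝ (GV n) :=
  (⊤ : Submodule ℝ ℝ).prod (Submodule.pi Set.univ fun j =>
    letI := Classical.dec (j ∈ S)
    if j ∈ S then (⊥ : Submodule ℝ (Matrix (Fin 2) (Fin 2) ℂ)) else su2)

/-- The projection `P_j : g → su(2)`, `(t, X) ↦ X j`. -/
def Pj {n : ℕ} (j : Fin n) : GV n →ₗ[ℝ] Matrix (Fin 2) (Fin 2) ℂ :=
  (LinearMap.proj j).comp (LinearMap.snd ℝ ℝ (Fin n → Matrix (Fin 2) (Fin 2) ℂ))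

/-- Apply the matrix `X` to qubit `j` of the state `ψ`. -/
def applySingle {n : ℕ} (j : Fin n) (X : Matrix (Fin 2) (Fin 2) ℂ) (ψ : QState n) : QState n :=
  fun I => ∑ k : Fin 2, X (I j) k * ψ (Function.update I j k)

/-- The infinitesimal local-unitary action: `dΦ_ψ(t, X) = i t ψ + Σ_j X_j ψ`. -/
def dPhi {n : ℕ} (ψ : QState n) : GV n →ₗ[ℝ] QState n where
  toFun x := fun I => Complex.I * (x.1 : ℂ) * ψ I + ∑ j, applySingle j (x.2 j) ψ I
  map_add' x y := by
    funext I
    simp only [applySingle, Prod.fst_add, Prod.snd_add, Pi.add_apply, Matrix.add_apply,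
      Complex.ofReal_add, add_mul, Finset.sum_add_distrib]
    ring
  map_smul' r x := by
    funext I
    simp only [applySingle, Prod.smul_fst, Prod.smul_snd, Pi.smul_apply, Matrix.smul_apply,
      smul_eq_mul, Complex.real_smul, Complex.ofReal_mul, RingHom.id_apply,
      Finset.mul_sum, mul_add]
    congr 1
    · ring
    · refine Finset.sum_congr rfl fun j _ => Finset.sum_congr rfl fun k _ => by ring

/-- The stabilizer subalgebra `K_ψ = {(t,X) ∈ g : dΦ_ψ(t,X) = 0}`. -/
def stab {n : ℕ} (ψ : QState n) : Submodule ℝ (GV n) :=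
  gSub n ⊓ LinearMap.ker (dPhi ψ)

/-- The componentwise bracket on `g` (zero in the `u(1)` component). -/
def gBracket {n : ℕ} (x y : GV n) : GV n :=
  (0, fun j => ⁅x.2 j, y.2 j⁆)

/-- An `su(2)` block for `ψ`: a set `S` of qubits with `dim (K_ψ ∩ g_S) > 1` and
`dim (K_ψ ∩ g_{S'}) = 0` for every proper subset `S' ⊊ S`. -/
def Su2Block {n : ℕ} (ψ : QState n) (S : Set (Fin n)) : Prop :=
  1 < Module.finrank ℝ ↥(stab ψ ⊓ gS S) ∧
  ∀ S' : Set (Fin n), S' ⊂ S → Module.finrank ℝ ↥(stab ψ ⊓ gS S') = 0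

/-- The union `B` of all `su(2)` blocks for `ψ`. -/
def blockUnion {n : ℕ} (ψ : QState n) : Set (Fin n) :=
  {q | ∃ S : Set (Fin n), Su2Block ψ S ∧ q ∈ S}

/-- The number `p` of `su(2)` blocks for `ψ`. -/
def blockCount {n : ℕ} (ψ : QState n) : ℕ :=
  {S : Set (Fin n) | Su2Block ψ S}.ncard

/-- `ψ` factors across the set `S` of qubits: `ψ(I) = φ(I|_S) · χ(I|_{Sᶜ})`. -/
def FactorsAcross {n : ℕ} (ψ : QState n) (S : Set (Fin n)) : Prop :=
  ∃ (φ : (↥S → Fin 2) → ℂ) (χ : (↥(Sᶜ) → Fin 2) → ℂ),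
    ∀ I : Fin n → Fin 2, ψ I = φ (fun j => I j.1) * χ (fun j => I j.1)

/-- `ψ` is a nonproduct state: it factors across no proper nonempty set of qubits. -/
def IsNonproduct {n : ℕ} (ψ : QState n) : Prop :=
  ∀ S : Set (Fin n), S ≠ ∅ → S ≠ Set.univ → ¬ FactorsAcross ψ S

/-- `ψ` has a single-qubit factor. -/
def HasSingleQubitFactor {n : ℕ} (ψ : QState n) : Prop :=
  ∃ j : Fin n, FactorsAcross ψ {j}

/-- Apply the local unitary (or just local linear) transformation `⊗_j U_j` to `ψ`. -/
def luApply {n : ℕ} (U : Fin n → Matrix (Fin 2) (Fin 2) ℂ) (ψ : QState n) : QState n :=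
  fun I => ∑ J : Fin n → Fin 2, (∏ j, U j (I j) (J j)) * ψ J

/-- Local unitary equivalence of `n`-qubit states. -/
def LUEquiv {n : ℕ} (ψ ψ' : QState n) : Prop :=
  ∃ U : Fin n → Matrix (Fin 2) (Fin 2) ℂ,
    (∀ j, U j ∈ Matrix.unitaryGroup (Fin 2) ℂ) ∧ ψ' = luApply U ψ

/-- The two-qubit singlet state `φ(a,b) = δ_{a0} δ_{b1} − δ_{a1} δ_{b0}`. -/
def singletFn : Fin 2 → Fin 2 → ℂ := fun a b =>
  if a = 0 ∧ b = 1 then 1 else if a = 1 ∧ b = 0 then -1 else 0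

/-- `ψ` has a singlet factor: it is LU-equivalent to a state that factors across a
two-element set of qubits, with the two-qubit factor being the singlet. -/
def HasSingletFactor {n : ℕ} (ψ : QState n) : Prop :=
  ∃ ψ' : QState n, LUEquiv ψ ψ' ∧ ∃ j k : Fin n, j ≠ k ∧
    ∃ χ : (↥(({j, k} : Set (Fin n))ᶜ) → Fin 2) → ℂ,
      ∀ I : Fin n → Fin 2, ψ' I = singletFn (I j) (I k) * χ (fun q => I q.1)

/-- The matrix `A = diag(i, −i) ∈ su(2)`. -/
def matA : Matrix (Fin 2) (Fin 2) ℂ := !![Complex.I, 0; 0, -Complex.I]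

/-- The generalized `n`-qubit GHZ state `α|0…0⟩ + β|1…1⟩`. -/
def ghz (n : ℕ) (α β : ℂ) : QState n := fun I =>
  if ∀ j, I j = 0 then α else if ∀ j, I j = 1 then β else 0

/-!
Suppose blocks `S ≠ T` share the qubit `j`, say `S ⊄ T`. Minimality of `S` gives
`K_ψ ∩ g_{S∩T} = 0`; since `K_ψ` is closed under the componentwise bracket, every element of
`K_ψ ∩ g_S` commutes at qubit `j` with every element of `K_ψ ∩ g_T`. Minimality also makes `P_j`
injective on `K_ψ ∩ g_S` and on `K_ψ ∩ g_T`, so the latter supplies some `Y ≠ 0` in `su(2)`, and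
`P_j` embeds `K_ψ ∩ g_S` into the centralizer of `Y` in `su(2)`, which is the line `ℝ Y`. Thus
`dim (K_ψ ∩ g_S) ≤ 1`, contradicting the block condition.
-/

theorem Matrix.mul_add_mul_eq_trace_smul_one {R : Type*} [CommRing R]
    {A B : Matrix (Fin 2) (Fin 2) R} (hA : A.trace = 0) (hB : B.trace = 0) :
    A * B + B * A = (A * B).trace • 1 := by
  rw [Matrix.trace_fin_two, add_eq_zero_iff_neg_eq'] at hA hB
  rw [Matrix.eta_fin_two A, Matrix.eta_fin_two B, ← hA, ← hB]
  ext i k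
  fin_cases i <;> fin_cases k <;> simp [Matrix.trace_fin_two] <;> ring

theorem lie_mem_su2 {X Y : Matrix (Fin 2) (Fin 2) ℂ} (hX : X ∈ su2) (hY : Y ∈ su2) :
    ⁅X, Y⁆ ∈ su2 := by
  obtain ⟨hXH, -⟩ := hX
  obtain ⟨hYH, -⟩ := hY
  refine ⟨?_, ?_⟩
  · rw [Ring.lie_def, Matrix.conjTranspose_sub, Matrix.conjTranspose_mul,
      Matrix.conjTranspose_mul, hXH, hYH]
    noncomm_ring
  · rw [Ring.lie_def, Matrix.trace_sub, Matrix.trace_mul_comm, sub_self]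

/- For traceless `2 × 2` matrices `XY + YX = tr(XY) • 1`; if `X` and `Y` commute this gives
`tr(Y²) • X = tr(XY) • Y`, and `tr(Y²) ≠ 0` because `Y² = -YᴴY`. -/
open scoped ComplexOrder in
theorem exists_real_smul_of_commute_su2 {X Y : Matrix (Fin 2) (Fin 2) ℂ} (hX : X ∈ su2)
    (hY : Y ∈ su2) (hY0 : Y ≠ 0) (hXY : Commute X Y) : ∃ r : ℝ, X = r • Y := by
  obtain ⟨hXH, hXtr⟩ := hX
  obtain ⟨hYH, hYtr⟩ := hY
  have hXY2 : (2 : ℂ) • (X * Y) = (X * Y).trace • 1 := by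
    rw [← Matrix.mul_add_mul_eq_trace_smul_one hXtr hYtr, hXY.eq, two_smul]
  have hYY2 : (2 : ℂ) • (Y * Y) = (Y * Y).trace • 1 := by
    rw [← Matrix.mul_add_mul_eq_trace_smul_one hYtr hYtr, two_smul]
  have hd : (Y * Y).trace ≠ 0 := by
    intro hd
    rw [hd, zero_smul, smul_eq_zero] at hYY2
    refine hY0 (Matrix.conjTranspose_mul_self_eq_zero.mp ?_)
    rw [hYH, Matrix.neg_mul, hYY2.resolve_left two_ne_zero, neg_zero]
  set μ := (X * Y).trace / (Y * Y).trace
  have hμ : X = μ • Y := by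
    have key : (Y * Y).trace • X = (X * Y).trace • Y := by
      calc (Y * Y).trace • X = X * ((Y * Y).trace • 1) := by rw [Matrix.mul_smul, mul_one]
        _ = ((2 : ℂ) • (X * Y)) * Y := by rw [← hYY2, Matrix.mul_smul, smul_mul_assoc, mul_assoc]
        _ = (X * Y).trace • Y := by rw [hXY2, smul_mul_assoc, one_mul]
    apply smul_right_injective _ hd
    simp only [smul_smul, μ, mul_div_cancel₀ _ hd, key]
  have hμ_real : (starRingEnd ℂ) μ = μ := by
    have h := hXH
    rw [hμ, Matrix.conjTranspose_smul, hYH, smul_neg, neg_inj] at h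
    exact smul_left_injective ℂ hY0 h
  obtain ⟨r, hr⟩ := Complex.conj_eq_iff_real.mp hμ_real
  exact ⟨r, by rw [hμ, hr, Complex.coe_smul]⟩

section LocalOperators

variable {n : ℕ}

def qubitOp (j : Fin n) : Matrix (Fin 2) (Fin 2) ℂ →ₐ[ℂ] Module.End ℂ (QState n) :=
  AlgHom.ofLinearMap
    (LinearMap.mk₂ ℂ (applySingle j)
      (fun X Y ψ => by funext I; simp [applySingle, add_mul, Finset.sum_add_distrib])
      (fun c X ψ => by
        funext I
        simp only [applySingle, Matrix.smul_apply, Pi.smul_apply, smul_eq_mul, Fin.sum_univ_two]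
        ring)
      (fun X ψ φ => by funext I; simp [applySingle, mul_add, Finset.sum_add_distrib])
      (fun c X ψ => by
        funext I
        simp only [applySingle, Pi.smul_apply, smul_eq_mul, Fin.sum_univ_two]
        ring))
    (LinearMap.ext fun ψ => funext fun I => by simp [applySingle, Matrix.one_apply])
    (fun X Y => LinearMap.ext fun ψ => funext fun I => by
      simp only [LinearMap.mk₂_apply, Module.End.mul_apply, applySingle, Matrix.mul_apply,
        Finset.sum_mul, Finset.mul_sum, Function.update_self, Function.update_idem]
      rw [Finset.sum_comm]
      exact Finset.sum_congr rfl fun _ _ => Finset.sum_congr rfl fun _ _ => by ring)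

theorem qubitOp_apply (j : Fin n) (X : Matrix (Fin 2) (Fin 2) ℂ) (ψ : QState n) :
    qubitOp j X ψ = applySingle j X ψ := rfl

theorem qubitOp_commute {j k : Fin n} (h : j ≠ k) (X Y : Matrix (Fin 2) (Fin 2) ℂ) :
    Commute (qubitOp j X) (qubitOp k Y) := by
  refine LinearMap.ext fun ψ => funext fun I => ?_
  simp only [Module.End.mul_apply, qubitOp_apply, applySingle, Finset.mul_sum]
  rw [Finset.sum_comm]
  refine Finset.sum_congr rfl fun b _ => Finset.sum_congr rfl fun a _ => ?_
  rw [Function.update_of_ne h.symm, Function.update_of_ne h, Function.update_comm h]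
  ring

def localOp (X : Fin n → Matrix (Fin 2) (Fin 2) ℂ) : Module.End ℂ (QState n) :=
  ∑ j, qubitOp j (X j)

theorem localOp_lie (X Y : Fin n → Matrix (Fin 2) (Fin 2) ℂ) :
    localOp (fun j => ⁅X j, Y j⁆) = localOp X * localOp Y - localOp Y * localOp X := by
  rw [localOp, localOp, localOp, Finset.sum_mul_sum, Finset.sum_mul_sum,
    Finset.sum_comm (γ := Fin n), ← Finset.sum_sub_distrib]
  refine Finset.sum_congr rfl fun j _ => ?_
  rw [← Finset.sum_sub_distrib, Finset.sum_eq_single j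
    (fun k _ hk => by rw [(qubitOp_commute hk.symm _ _).eq, sub_self])
    (fun h => absurd (Finset.mem_univ j) h), Ring.lie_def, map_sub, map_mul, map_mul]

theorem dPhi_apply (ψ : QState n) (x : GV n) :
    dPhi ψ x = (Complex.I * x.1) • ψ + localOp x.2 ψ := by
  funext I
  simp [dPhi, localOp, qubitOp_apply, mul_assoc]

theorem dPhi_gBracket_eq_zero {ψ : QState n} {x y : GV n} (hx : dPhi ψ x = 0)
    (hy : dPhi ψ y = 0) : dPhi ψ (gBracket x y) = 0 := by
  rw [dPhi_apply, add_eq_zero_iff_eq_neg'] at hx hy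
  rw [dPhi_apply, gBracket, localOp_lie, LinearMap.sub_apply,
    Module.End.mul_apply, Module.End.mul_apply, hx, hy, map_neg, map_neg, map_smul, map_smul,
    hx, hy, Complex.ofReal_zero, mul_zero, zero_smul, zero_add]
  module

end LocalOperators

section Blocks

open Module

variable {n : ℕ} {ψ : QState n}

theorem mem_gS_iff {S : Set (Fin n)} {x : GV n} :
    x ∈ gS S ↔ x.1 = 0 ∧ (∀ j ∈ S, x.2 j ∈ su2) ∧ ∀ j ∉ S, x.2 j = 0 := by
  simp only [gS, Submodule.mem_prod, Submodule.mem_bot, Submodule.mem_pi, Set.mem_univ,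
    forall_true_left]
  refine and_congr_right fun _ => ⟨fun h => ⟨fun k hk => ?_, fun k hk => ?_⟩, fun h k => ?_⟩
  · simpa [hk] using h k
  · simpa [hk] using h k
  · by_cases hk : k ∈ S
    · simpa [hk] using h.1 k hk
    · simpa [hk] using h.2 k hk

theorem gBracket_mem_stab {x y : GV n} (hx : x ∈ stab ψ) (hy : y ∈ stab ψ) :
    gBracket x y ∈ stab ψ := by
  obtain ⟨⟨-, hxg⟩, hxker⟩ := hx
  obtain ⟨⟨-, hyg⟩, hyker⟩ := hy
  exact ⟨⟨trivial, fun k _ => lie_mem_su2 (hxg k trivial) (hyg k trivial)⟩,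
    dPhi_gBracket_eq_zero hxker hyker⟩

theorem gBracket_mem_gS_inter {S T : Set (Fin n)} {x y : GV n} (hx : x ∈ gS S)
    (hy : y ∈ gS T) : gBracket x y ∈ gS (S ∩ T) := by
  obtain ⟨-, hxS, hx0⟩ := mem_gS_iff.mp hx
  obtain ⟨-, hyT, hy0⟩ := mem_gS_iff.mp hy
  refine mem_gS_iff.mpr ⟨rfl, fun k hk => lie_mem_su2 (hxS k hk.1) (hyT k hk.2), fun k hk => ?_⟩
  by_cases hkS : k ∈ S
  · simp [gBracket, Ring.lie_def, hy0 k fun hkT => hk ⟨hkS, hkT⟩]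
  · simp [gBracket, Ring.lie_def, hx0 k hkS]

theorem commute_of_stab_inf_gS_inter_eq_bot {S T : Set (Fin n)}
    (hST : stab ψ ⊓ gS (S ∩ T) = ⊥) {x y : GV n} (hx : x ∈ stab ψ ⊓ gS S)
    (hy : y ∈ stab ψ ⊓ gS T) (j : Fin n) : Commute (x.2 j) (y.2 j) := by
  have h : gBracket x y ∈ stab ψ ⊓ gS (S ∩ T) :=
    ⟨gBracket_mem_stab hx.1 hy.1, gBracket_mem_gS_inter hx.2 hy.2⟩
  rw [hST, Submodule.mem_bot] at h
  have hj : ⁅x.2 j, y.2 j⁆ = 0 := congrFun (congrArg Prod.snd h) j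
  rwa [Ring.lie_def, sub_eq_zero] at hj

theorem Su2Block.eq_zero_of_apply_eq_zero {S : Set (Fin n)} (hS : Su2Block ψ S) {j : Fin n}
    (hj : j ∈ S) {x : GV n} (hx : x ∈ stab ψ ⊓ gS S) (hxj : x.2 j = 0) : x = 0 := by
  have hbot : stab ψ ⊓ gS (S \ {j}) = ⊥ :=
    Submodule.finrank_eq_zero.mp (hS.2 _ (Set.sdiff_singleton_ssubset.mpr hj))
  obtain ⟨hx1, hxS, hx0⟩ := mem_gS_iff.mp hx.2
  have hx' : x ∈ stab ψ ⊓ gS (S \ {j}) := by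
    refine ⟨hx.1, mem_gS_iff.mpr ⟨hx1, fun k hk => hxS k hk.1, fun k hk => ?_⟩⟩
    by_cases hkj : k = j
    · exact hkj ▸ hxj
    · exact hx0 k fun hkS => hk ⟨hkS, hkj⟩
  rwa [hbot, Submodule.mem_bot] at hx'

theorem Su2Block.finrank_le_one_of_commute {S : Set (Fin n)} (hS : Su2Block ψ S) {j : Fin n}
    (hj : j ∈ S) {Y : Matrix (Fin 2) (Fin 2) ℂ} (hY : Y ∈ su2) (hY0 : Y ≠ 0)
    (hcomm : ∀ x ∈ stab ψ ⊓ gS S, Commute (x.2 j) Y) :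
    finrank ℝ ↥(stab ψ ⊓ gS S) ≤ 1 := by
  have hinj : Function.Injective ((Pj j).domRestrict (stab ψ ⊓ gS S)) := by
    refine LinearMap.ker_eq_bot.mp (LinearMap.ker_eq_bot'.mpr fun x hx => ?_)
    exact Subtype.ext (hS.eq_zero_of_apply_eq_zero hj x.2 hx)
  rw [← LinearMap.finrank_range_of_inj hinj, ← finrank_span_singleton (K := ℝ) hY0]
  refine Submodule.finrank_mono ?_
  rintro _ ⟨x, rfl⟩
  obtain ⟨r, hr⟩ := exists_real_smul_of_commute_su2 ((mem_gS_iff.mp x.2.2).2.1 j hj) hY hY0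
    (hcomm x x.2)
  exact Submodule.mem_span_singleton.mpr ⟨r, hr.symm⟩

theorem Su2Block.subset_of_mem {S T : Set (Fin n)} (hS : Su2Block ψ S) (hT : Su2Block ψ T)
    {j : Fin n} (hjS : j ∈ S) (hjT : j ∈ T) : S ⊆ T := by
  by_contra hST
  have hbot : stab ψ ⊓ gS (S ∩ T) = ⊥ := Submodule.finrank_eq_zero.mp
    (hS.2 _ (Set.inter_subset_left.ssubset_of_ne fun h => hST (h ▸ Set.inter_subset_right)))
  obtain ⟨y, hy, hy0⟩ := Submodule.exists_mem_ne_zero_of_ne_bot fun h : stab ψ ⊓ gS T = ⊥ => by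
    have hT1 := hT.1
    rw [h, finrank_bot] at hT1
    omega
  have hyj : y.2 j ≠ 0 := fun h => hy0 (hT.eq_zero_of_apply_eq_zero hjT hy h)
  have hle := hS.finrank_le_one_of_commute hjS ((mem_gS_iff.mp hy.2).2.1 j hjT) hyj
    fun x hx => commute_of_stab_inf_gS_inter_eq_bot hbot hx hy j
  exact absurd hS.1 (not_lt.mpr hle)

end Blocks

theorem stmt4_general {n : ℕ} (ψ : QState n)
    (S T : Set (Fin n)) (hS : Su2Block ψ S) (hT : Su2Block ψ T)
    (j : Fin n) (hjS : j ∈ S) (hjT : j ∈ T) : S = T :=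
  (hS.subset_of_mem hT hjS hjT).antisymm (hT.subset_of_mem hS hjT hjS)

/-- A qubit belongs to at most one `su(2)` block for `ψ`. -/
theorem stmt4 {n : ℕ} (hn : 1 ≤ n) (ψ : QState n) (hψ : ψ ≠ 0)
    (S T : Set (Fin n)) (hS : Su2Block ψ S) (hT : Su2Block ψ T)
    (j : Fin n) (hjS : j ∈ S) (hjT : j ∈ T) : S = T :=
  stmt4_general ψ S T hS hT j hjS hjT
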